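/- Let p be a prime, n ≥ 1, and let γ ∈ GL_n(ℚ_p) be a matrix whose characteristic polynomial is irreducible over ℚ_p. Then there exists a compact subset C of GL_n(ℚ_p) such that every g ∈ GL_n(ℚ_p) for which all entries of g⁻¹ · γ · g lie in ℤ_p can be written as g = z · c with z a nonzero scalar matrix (z = λ·I, λ ∈ ℚ_pˣ) and c ∈ C. -/

import Mathlib

open Matrix Polynomial Metric

private noncomputable def Pmat {p : ℕ} [Fact p.Prime] {n : ℕ}
    (γ : Matrix (Fin n) (Fin n) ℚ_[p]) (v : Fin n → ℚ_[p]) :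
    Matrix (Fin n) (Fin n) ℚ_[p] :=
  Matrix.of fun i k => ((γ ^ (k : ℕ)).mulVec v) i

private theorem det_Pmat_ne_zero {p : ℕ} [Fact p.Prime] {n : ℕ}
    (γ : Matrix (Fin n) (Fin n) ℚ_[p])
    (hirr : Irreducible γ.charpoly) {v : Fin n → ℚ_[p]} (hv : v ≠ 0) :
    (Pmat γ v).det ≠ 0 := by
  have hn : Nonempty (Fin n) := by
    rcases Nat.eq_zero_or_pos n with h | h
    · subst h; exact absurd (Subsingleton.elim v 0) hv
    · exact ⟨⟨0, h⟩⟩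
  intro hdet
  obtain ⟨x, hx, hPx⟩ := (Matrix.exists_mulVec_eq_zero_iff).mpr hdet
  set q : Polynomial ℚ_[p] := ∑ k : Fin n, C (x k) * X ^ (k : ℕ) with hq
  have hcoeff : ∀ k : Fin n, q.coeff (k : ℕ) = x k := by
    intro k
    rw [hq, Polynomial.finset_sum_coeff]
    rw [Finset.sum_eq_single k]
    · simp
    · intro b _ hbk
      simp only [Polynomial.coeff_C_mul, Polynomial.coeff_X_pow]
      rw [if_neg (by simpa [Fin.val_eq_val, eq_comm] using hbk), mul_zero]
    · simp
  have hq0 : q ≠ 0 := by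
    intro h
    apply hx
    funext k
    have := hcoeff k
    rw [h] at this
    simpa using this.symm
  have hdeg : q.natDegree < n := by
    have : q.natDegree ≤ n - 1 := by
      rw [hq]
      refine Polynomial.natDegree_sum_le_of_forall_le _ _ fun k _ => ?_
      calc (C (x k) * X ^ (k : ℕ)).natDegree ≤ (X ^ (k:ℕ)).natDegree := Polynomial.natDegree_C_mul_le (x k) (X ^ (k : ℕ))
        _ ≤ (k : ℕ) := by simp
        _ ≤ n - 1 := by omega
    have hn' : 1 ≤ n := Nat.one_le_iff_ne_zero.mpr (by rintro rfl; exact hn.elim fun i => i.elim0)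
    omega
  have hnotdvd : ¬ γ.charpoly ∣ q := by
    intro h
    have := Polynomial.natDegree_le_of_dvd h hq0
    rw [Matrix.charpoly_natDegree_eq_dim, Fintype.card_fin] at this
    omega
  obtain ⟨a, b, hab⟩ := (hirr.coprime_iff_not_dvd.mpr hnotdvd)
  have hqv : (Polynomial.aeval γ q).mulVec v = 0 := by
    have haq : Polynomial.aeval γ q = ∑ k : Fin n, x k • γ ^ (k : ℕ) := by
      rw [hq, map_sum]
      refine Finset.sum_congr rfl fun k _ => ?_
      simp [Algebra.smul_def]
    rw [haq]
    funext i
    have : (∑ k : Fin n, x k • γ ^ (k : ℕ)).mulVec v i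
        = ∑ k : Fin n, x k * ((γ ^ (k : ℕ)).mulVec v i) := by
      simp only [Matrix.mulVec, dotProduct, Matrix.sum_apply, Matrix.smul_apply,
        smul_eq_mul, Finset.sum_mul, Finset.mul_sum, mul_assoc]
      rw [Finset.sum_comm]
    rw [this]
    have := congrFun hPx i
    simpa [Pmat, Matrix.mulVec, dotProduct, mul_comm] using this
  have h1 : Polynomial.aeval γ (a * γ.charpoly + b * q) = 1 := by rw [hab]; simp
  rw [map_add, _root_.map_mul, _root_.map_mul, Matrix.aeval_self_charpoly, mul_zero, zero_add] at h1
  apply hv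
  calc v = (Polynomial.aeval γ b * Polynomial.aeval γ q).mulVec v := by rw [h1, Matrix.one_mulVec]
    _ = (Polynomial.aeval γ b).mulVec ((Polynomial.aeval γ q).mulVec v) := by
        rw [Matrix.mulVec_mulVec]
    _ = 0 := by rw [hqv, Matrix.mulVec_zero]

private theorem exists_delta {p : ℕ} [Fact p.Prime] {n : ℕ} (hn : 1 ≤ n)
    (γ : Matrix (Fin n) (Fin n) ℚ_[p]) (hirr : Irreducible γ.charpoly) :
    ∃ δ : ℝ, 0 < δ ∧ ∀ v : Fin n → ℚ_[p], (∀ i, ‖v i‖ ≤ 1) → (∃ i, ‖v i‖ = 1) →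
      δ ≤ ‖(Pmat γ v).det‖ := by
  have i0 : Fin n := ⟨0, hn⟩
  set S : Set (Fin n → ℚ_[p]) :=
    {v | (∀ i, ‖v i‖ ≤ 1) ∧ ∃ i, ‖v i‖ = 1} with hS
  have hScompact : IsCompact S := by
    have hK : IsCompact (Set.pi Set.univ fun _ : Fin n => closedBall (0:ℚ_[p]) 1) :=
      isCompact_univ_pi fun _ => isCompact_closedBall 0 1
    have hT : IsClosed {v : Fin n → ℚ_[p] | ∃ i, ‖v i‖ = 1} := by
      have : {v : Fin n → ℚ_[p] | ∃ i, ‖v i‖ = 1} = ⋃ i, {v | ‖v i‖ = 1} := by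
        ext v; simp
      rw [this]
      exact isClosed_iUnion_of_finite fun i =>
        isClosed_eq (Continuous.norm (continuous_apply i)) continuous_const
    have : S = (Set.pi Set.univ fun _ : Fin n => closedBall (0:ℚ_[p]) 1) ∩
        {v | ∃ i, ‖v i‖ = 1} := by
      ext v
      simp [hS, Set.mem_pi, mem_closedBall, dist_zero_right]
    rw [this]
    exact hK.inter_right hT
  have hScont : Continuous fun v : Fin n → ℚ_[p] => ‖(Pmat γ v).det‖ := by
    refine Continuous.norm (Continuous.matrix_det ?_)
    refine continuous_matrix fun i k => ?_
    simp only [Pmat, Matrix.of_apply, Matrix.mulVec, dotProduct]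
    exact continuous_finset_sum _ fun m _ => (continuous_const.mul (continuous_apply m))
  have hSne : S.Nonempty := ⟨fun _ => 1, fun i => by simp, ⟨i0, by simp⟩⟩
  obtain ⟨v₀, hv₀S, hv₀min⟩ := hScompact.exists_isMinOn hSne hScont.continuousOn
  refine ⟨‖(Pmat γ v₀).det‖, ?_, fun v h1 h2 => hv₀min ⟨h1, h2⟩⟩
  have hv₀ne : v₀ ≠ 0 := by
    obtain ⟨i, hi⟩ := hv₀S.2
    intro h
    rw [h] at hi
    simp at hi
  exact norm_pos_iff.mpr (det_Pmat_ne_zero γ hirr hv₀ne)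

private theorem det_lower_bound {p : ℕ} [Fact p.Prime] {n : ℕ}
    (γ c : Matrix (Fin n) (Fin n) ℚ_[p]) (hc : IsUnit c.det)
    (hcint : ∀ i j, ‖c i j‖ ≤ 1) (i0 j0 : Fin n) (hmax : ‖c i0 j0‖ = 1)
    (hA : ∀ i j, ‖(c⁻¹ * γ * c) i j‖ ≤ 1)
    {δ : ℝ}
    (hδ : ∀ v : Fin n → ℚ_[p], (∀ i, ‖v i‖ ≤ 1) → (∃ i, ‖v i‖ = 1) →
      δ ≤ ‖(Pmat γ v).det‖) :
    δ ≤ ‖c.det‖ := by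
  set A := c⁻¹ * γ * c with hAdef
  have hγc : γ * c = c * A := by
    rw [hAdef, Matrix.mul_assoc, ← Matrix.mul_assoc c c⁻¹, Matrix.mul_nonsing_inv c hc,
      Matrix.one_mul]
  have hγck : ∀ k : ℕ, γ ^ k * c = c * A ^ k := by
    intro k
    induction k with
    | zero => simp
    | succ k ih =>
      rw [pow_succ, pow_succ, Matrix.mul_assoc, hγc, ← Matrix.mul_assoc, ih, Matrix.mul_assoc]
  set A₀ : Matrix (Fin n) (Fin n) ℤ_[p] := Matrix.of fun i j => (⟨A i j, hA i j⟩ : ℤ_[p])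
    with hA₀def
  have hA₀ : A = A₀.map ((↑) : ℤ_[p] → ℚ_[p]) := by
    ext i j; simp [hA₀def]; rfl
  set B₀ : Matrix (Fin n) (Fin n) ℤ_[p] := Matrix.of fun m k => (A₀ ^ (k : ℕ)) m j0 with hB₀def
  set v : Fin n → ℚ_[p] := fun m => c m j0 with hvdef
  have hAk : ∀ k : ℕ, A ^ k = (A₀ ^ k).map ((↑) : ℤ_[p] → ℚ_[p]) := by
    intro k
    rw [hA₀]
    have : A₀.map ((↑) : ℤ_[p] → ℚ_[p]) = (PadicInt.Coe.ringHom (p := p)).mapMatrix A₀ := rfl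
    rw [this, ← map_pow]
    rfl
  have hPmat : Pmat γ v = c * B₀.map ((↑) : ℤ_[p] → ℚ_[p]) := by
    ext i k
    have h1 : Pmat γ v i k = (γ ^ (k : ℕ) * c) i j0 := by
      simp [Pmat, Matrix.mulVec, dotProduct, Matrix.mul_apply, hvdef]
    rw [h1, hγck, Matrix.mul_apply, Matrix.mul_apply]
    refine Finset.sum_congr rfl fun m _ => ?_
    congr 1
    rw [hAk]
    simp [hB₀def]; rfl
  have hdet : (Pmat γ v).det = c.det * ((B₀.det : ℤ_[p]) : ℚ_[p]) := by
    rw [hPmat, Matrix.det_mul]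
    congr 1
    exact ((PadicInt.Coe.ringHom (p := p)).map_det B₀).symm
  have hBnorm : ‖((B₀.det : ℤ_[p]) : ℚ_[p])‖ ≤ 1 := B₀.det.2
  have hv1 : ∀ i, ‖v i‖ ≤ 1 := fun i => hcint i j0
  have hv2 : ∃ i, ‖v i‖ = 1 := ⟨i0, hmax⟩
  calc δ ≤ ‖(Pmat γ v).det‖ := hδ v hv1 hv2
    _ = ‖c.det‖ * ‖((B₀.det : ℤ_[p]) : ℚ_[p])‖ := by rw [hdet, norm_mul]
    _ ≤ ‖c.det‖ * 1 := by
        exact mul_le_mul_of_nonneg_left hBnorm (norm_nonneg _)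
    _ = ‖c.det‖ := mul_one _

/-- For `γ ∈ GL_n(ℚ_p)` with irreducible characteristic polynomial, the set of
`g ∈ GL_n(ℚ_p)` with `g⁻¹ γ g` integral is compact modulo the center: it is contained
in `Z · C` for a compact set `C`, where `Z` consists of the nonzero scalar matrices. -/
theorem compact_mod_center_conjugation_set_GL
    (p : ℕ) [Fact p.Prime] (n : ℕ) (hn : 1 ≤ n)
    (γ : Matrix (Fin n) (Fin n) ℚ_[p]) (hγ : IsUnit γ.det)
    (hirr : Irreducible γ.charpoly) :
    ∃ C : Set (Matrix (Fin n) (Fin n) ℚ_[p]), IsCompact C ∧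
      (∀ c ∈ C, IsUnit c.det) ∧
      ∀ g : Matrix (Fin n) (Fin n) ℚ_[p], IsUnit g.det →
        (∀ i j, ‖(g⁻¹ * γ * g) i j‖ ≤ 1) →
        ∃ (lam : ℚ_[p]ˣ) (c : Matrix (Fin n) (Fin n) ℚ_[p]),
          c ∈ C ∧ g = ((lam : ℚ_[p]) • (1 : Matrix (Fin n) (Fin n) ℚ_[p])) * c := by
  obtain ⟨δ, hδpos, hδ⟩ := exists_delta hn γ hirr
  haveI hne : Nonempty (Fin n) := ⟨⟨0, hn⟩⟩
  refine ⟨{c | (∀ i j, ‖c i j‖ ≤ 1) ∧ δ ≤ ‖c.det‖}, ?_, ?_, ?_⟩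
  · -- compactness
    have hK : IsCompact {c : Matrix (Fin n) (Fin n) ℚ_[p] | ∀ i j, ‖c i j‖ ≤ 1} := by
      have heq : {c : Matrix (Fin n) (Fin n) ℚ_[p] | ∀ i j, ‖c i j‖ ≤ 1} =
          (Set.pi Set.univ fun _ : Fin n =>
            Set.pi Set.univ fun _ : Fin n => closedBall (0:ℚ_[p]) 1) := by
        ext c
        constructor
        · intro h i _ j _
          simpa [dist_zero_right] using h i j
        · intro h i j
          simpa [dist_zero_right] using h i (Set.mem_univ i) j (Set.mem_univ j)
      rw [heq]
      exact isCompact_univ_pi fun _ => isCompact_univ_pi fun _ => isCompact_closedBall 0 1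
    have hClosed : IsClosed {c : Matrix (Fin n) (Fin n) ℚ_[p] | δ ≤ ‖c.det‖} :=
      isClosed_le continuous_const (Continuous.norm (Continuous.matrix_det continuous_id))
    have : {c : Matrix (Fin n) (Fin n) ℚ_[p] | (∀ i j, ‖c i j‖ ≤ 1) ∧ δ ≤ ‖c.det‖} =
        {c | ∀ i j, ‖c i j‖ ≤ 1} ∩ {c | δ ≤ ‖c.det‖} := rfl
    rw [this]
    exact hK.inter_right hClosed
  · -- unit dets
    intro c hc
    refine isUnit_iff_ne_zero.mpr fun h => ?_
    have := hc.2
    rw [h] at this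
    simp at this
    linarith
  · -- main statement
    intro g hg hint
    obtain ⟨⟨i0, j0⟩, -, hmax⟩ := Finset.exists_max_image (Finset.univ : Finset (Fin n × Fin n))
      (fun q => ‖g q.1 q.2‖) ⟨⟨⟨0, hn⟩, ⟨0, hn⟩⟩, Finset.mem_univ _⟩
    have hmax' : ∀ i j, ‖g i j‖ ≤ ‖g i0 j0‖ := fun i j => hmax (i, j) (Finset.mem_univ _)
    set lam0 : ℚ_[p] := g i0 j0 with hlam0
    have hlam0ne : lam0 ≠ 0 := by
      intro h
      have hg0 : g = 0 := by
        ext i j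
        have := hmax' i j
        rw [h, norm_zero] at this
        simpa using norm_le_zero_iff.mp this
      rw [hg0, Matrix.det_zero] at hg
      exact not_isUnit_zero hg
    have hlampos : 0 < ‖lam0‖ := norm_pos_iff.mpr hlam0ne
    set c : Matrix (Fin n) (Fin n) ℚ_[p] := lam0⁻¹ • g with hcdef
    have hcint : ∀ i j, ‖c i j‖ ≤ 1 := by
      intro i j
      rw [hcdef]
      simp only [Matrix.smul_apply, smul_eq_mul, norm_mul, norm_inv]
      rw [inv_mul_le_iff₀ hlampos, mul_one]
      exact hmax' i j
    have hcmax : ‖c i0 j0‖ = 1 := by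
      rw [hcdef]
      simp only [Matrix.smul_apply, smul_eq_mul, norm_mul, norm_inv]
      rw [← hlam0, inv_mul_cancel₀ (ne_of_gt hlampos)]
    have hcdet : IsUnit c.det := by
      rw [hcdef, Matrix.det_smul]
      exact (IsUnit.pow _ (isUnit_iff_ne_zero.mpr (inv_ne_zero hlam0ne))).mul hg
    have hcinv : c⁻¹ = lam0 • g⁻¹ := by
      refine Matrix.inv_eq_right_inv ?_
      rw [hcdef, Matrix.smul_mul, Matrix.mul_smul, smul_smul,
        inv_mul_cancel₀ hlam0ne, Matrix.mul_nonsing_inv g hg, one_smul]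
    have hconj : c⁻¹ * γ * c = g⁻¹ * γ * g := by
      rw [hcinv, hcdef, Matrix.smul_mul, Matrix.mul_smul, Matrix.smul_mul, smul_smul,
        inv_mul_cancel₀ hlam0ne, one_smul]
    have hcbound : δ ≤ ‖c.det‖ := by
      refine det_lower_bound γ c hcdet hcint i0 j0 hcmax ?_ hδ
      rw [hconj]
      exact hint
    refine ⟨Units.mk0 lam0 hlam0ne, c, ⟨hcint, hcbound⟩, ?_⟩
    rw [Matrix.smul_mul, Matrix.one_mul, hcdef, smul_smul, Units.val_mk0,
      mul_inv_cancel₀ hlam0ne, one_smul]
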